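/- arXiv:2407.09824 — 4 statements merged into one kernel-verified Lean document; each statement's English description precedes it below -/
import Mathlib

section
/- For any finite group G and any irreducible complex representation ρ of G, the sum over all conjugacy classes C of G of the character values χ^ρ(C) is a nonnegative integer. -/
open Finset MulAction CategoryTheory.MonoidalCategory

/-!
The character of the conjugation representation `ℂ[G]` is `g ↦ |C_G(g)|`, and the class of `g`
has `|G| / |C_G(g)|` elements. Hence `|G| · ∑_C χ(C) = ∑_g |C_G(g)| χ(g)`, which is `|G|` times
the dimension of the `G`-invariants of `ℂ[G] ⊗ V`.
-/

theorem Representation.trace_ofMulAction {k G X : Type*} [CommRing k] [Monoid G]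
    [MulAction G X] [Fintype X] (g : G) :
    LinearMap.trace k _ (Representation.ofMulAction k G X g) = Nat.card (fixedBy X g) := by
  classical
  rw [LinearMap.trace_eq_matrix_trace k (MonoidAlgebra.basis X k), Matrix.trace,
    Nat.card_eq_fintype_card, Fintype.card_subtype, Finset.card_filter, Nat.cast_sum]
  refine Finset.sum_congr rfl fun x _ => ?_
  rw [Matrix.diag_apply, LinearMap.toMatrix_apply, MonoidAlgebra.basis_apply,
    Representation.ofMulAction_single]
  change (MonoidAlgebra.single (g • x) (1 : k)).coeff x = _
  simp [MonoidAlgebra.coeff_single, Finsupp.single_apply, mem_fixedBy]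

theorem ConjAct.fixedBy_toConjAct {G : Type*} [Group G] (g : G) :
    fixedBy G (ConjAct.toConjAct g) = Subgroup.centralizer {g} := by
  ext x
  rw [mem_fixedBy, ConjAct.toConjAct_smul, SetLike.mem_coe, Subgroup.mem_centralizer_singleton_iff,
    mul_inv_eq_iff_eq_mul, eq_comm]

theorem ConjClasses.card_carrier_mul_card_centralizer {G : Type*} [Group G] [Finite G] (g : G) :
    Nat.card (ConjClasses.mk g).carrier * Nat.card (Subgroup.centralizer {g}) = Nat.card G := by
  rw [← ConjAct.orbit_eq_carrier_conjClasses, Subgroup.nat_card_centralizer_nat_card_stabilizer,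
    Nat.card_coe_set_eq, ← index_stabilizer, Subgroup.index_mul_card]
  rfl

theorem IsConj.card_centralizer_eq {G : Type*} [Group G] {g h : G} (hgh : IsConj g h) :
    Nat.card (Subgroup.centralizer {g}) = Nat.card (Subgroup.centralizer {h}) := by
  have hrel : orbitRel (ConjAct G) G g h := by rwa [ConjAct.orbitRel_conjAct]
  rw [Subgroup.nat_card_centralizer_nat_card_stabilizer,
    Subgroup.nat_card_centralizer_nat_card_stabilizer]
  exact Nat.card_congr (stabilizerEquivStabilizerOfOrbitRel hrel).toEquiv

theorem sum_card_centralizer_smul {G M : Type*} [Group G] [Fintype G] [Fintype (ConjClasses G)]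
    [AddCommMonoid M] (f : G → M) (hf : ∀ g h : G, f (h * g * h⁻¹) = f g) :
    ∑ g, Nat.card (Subgroup.centralizer {g}) • f g
      = Nat.card G • ∑ C : ConjClasses G, f (Quotient.out C) := by
  classical
  rw [Finset.smul_sum, ← Finset.sum_fiberwise univ ConjClasses.mk]
  refine sum_congr rfl fun C _ => ?_
  have hout : ConjClasses.mk (Quotient.out C) = C := Quotient.out_eq C
  have hconst : ∀ g ∈ univ.filter (ConjClasses.mk · = C),
      Nat.card (Subgroup.centralizer {g}) • f g
        = Nat.card (Subgroup.centralizer {Quotient.out C}) • f (Quotient.out C) := by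
    intro g hg
    have hconj : IsConj (Quotient.out C) g := by
      rw [← ConjClasses.mk_eq_mk_iff_isConj, hout, (Finset.mem_filter.mp hg).2]
    obtain ⟨c, rfl⟩ := isConj_iff.mp hconj
    rw [hf, hconj.card_centralizer_eq]
  have hcard : #(univ.filter (ConjClasses.mk · = C))
      = Nat.card (ConjClasses.mk (Quotient.out C)).carrier := by
    rw [hout, ConjClasses.carrier_eq_preimage_mk, ← Fintype.card_subtype,
      ← Nat.card_eq_fintype_card]
    rfl
  rw [sum_congr rfl hconst, sum_const, smul_smul, hcard,
    ConjClasses.card_carrier_mul_card_centralizer]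

namespace FDRep

universe u

noncomputable def conjAct (k G : Type u) [Field k] [Group G] [Fintype G] : FDRep k G :=
  FDRep.of ((Representation.ofMulAction k (ConjAct G) G).comp
    (ConjAct.toConjAct : G ≃* ConjAct G).toMonoidHom)

theorem char_conjAct (k G : Type u) [Field k] [Group G] [Fintype G] (g : G) :
    (conjAct k G).character g = Nat.card (Subgroup.centralizer {g}) := by
  change LinearMap.trace k _ (Representation.ofMulAction k (ConjAct G) G (ConjAct.toConjAct g)) = _
  rw [Representation.trace_ofMulAction, ConjAct.fixedBy_toConjAct]
  rfl

end FDRep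

theorem sum_character_over_classes_nonneg_integer_general (G : Type) [Group G] [Fintype G]
    (V : FDRep ℂ G) :
    ∃ m : ℕ, ∑ᶠ C : ConjClasses G, V.character (Quotient.out C) = (m : ℂ) := by
  classical
  refine ⟨Module.finrank ℂ (Representation.invariants (FDRep.conjAct ℂ G ⊗ V).ρ), ?_⟩
  have hG : (Nat.card G : ℂ) ≠ 0 := Nat.cast_ne_zero.mpr Nat.card_pos.ne'
  have : Invertible (Nat.card G : ℂ) := invertibleOfNonzero hG
  have hsum : ∑ g, (FDRep.conjAct ℂ G ⊗ V).character g
      = Nat.card G * ∑ C : ConjClasses G, V.character (Quotient.out C) := by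
    simpa only [FDRep.char_tensor, Pi.mul_apply, FDRep.char_conjAct, nsmul_eq_mul] using
      sum_card_centralizer_smul V.character V.char_conj
  rw [finsum_eq_sum_of_fintype, ← FDRep.average_char_eq_finrank_invariants, hsum,
    inv_mul_cancel_left₀ hG]

/-- For any finite group `G` and any irreducible complex representation `V` of `G`,
the sum over all conjugacy classes `C` of `G` of the character values `χ_V(C)`
is a nonnegative integer. -/
theorem sum_character_over_classes_nonneg_integer (G : Type) [Group G] [Fintype G]
    (V : FDRep ℂ G) [CategoryTheory.Simple V] :
    ∃ m : ℕ, ∑ᶠ C : ConjClasses G, V.character (Quotient.out C) = (m : ℂ) :=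
  sum_character_over_classes_nonneg_integer_general G V
end

section
/- Let ω = (ω_1,...,ω_k) be a tuple of permutations in S_n such that every point of {1,...,n} that is moved by some ω_i is moved by exactly two of the permutations' cycles in total (i.e., every non-fixed point appears exactly twice among the cycle notations of the ω_i, where each ω_i is a single cycle). Then the product ω_1 ω_2 ⋯ ω_k is the identity if and only if the cycles can be perfectly paired: for every index i there exists a unique index i' ≠ i with ω_i · ω_{i'} = id (i.e., ω_{i'} = ω_i⁻¹). -/
/-!
Write each cycle of length `ℓ` as a product of `ℓ - 1` transpositions. If transpositions
`t₁, …, t_m` of an `n`-set have product `π` and generate a group with `o` orbits, then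
`n + c(π) ≤ m + 2 o`, where `c` counts cycles: appending a transposition changes `c` by one, and
it merges two orbits only when it merges two cycles of the product.

Group the `ω_i` into components, two cycles being linked when they move a common point.
Components have disjoint supports, so if `ω_1 ⋯ ω_k = 1` the ordered product over each component
is `1`. On a component with `p` cycles moving `s` points, each point is moved by exactly two of
the cycles, so the cycles factor into `2s - p` transpositions, which are transitive on the `s`
points; the inequality gives `2s ≤ 2s - p + 2`, so `p = 2` and the two cycles are mutually inverse.
Conversely, if the cycles are paired, a point moved by `ω_i` is moved only by `ω_i` and its
inverse, and the remaining factors fix both of them.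
-/

open Equiv Equiv.Perm Finset MulAction Subgroup
open scoped Pointwise

namespace Setoid

variable {α : Type*} {r s : Setoid α} {x y : α}

/- In the next lemmas `hle`, `hxy` and `hs` say that `s` is obtained from `r` by merging the
classes of `x` and `y`. -/

theorem rel_or_rel_pair_of_merge (hs : ∀ a b, ¬ r a x → ¬ r a y → s a b → r a b)
    {a b : α} (hab : s a b) : r a b ∨ ((r a x ∨ r a y) ∧ (r b x ∨ r b y)) := by
  by_cases ha : r a x ∨ r a y
  · by_cases hb : r b x ∨ r b y
    · exact .inr ⟨ha, hb⟩
    · rw [not_or] at hb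
      exact .inl (r.symm (hs b a hb.1 hb.2 (s.symm hab)))
  · rw [not_or] at ha
    exact .inl (hs a b ha.1 ha.2 hab)

theorem card_quotient_eq_of_merge (hle : r ≤ s) (hrxy : r x y)
    (hs : ∀ a b, ¬ r a x → ¬ r a y → s a b → r a b) :
    Nat.card (Quotient r) = Nat.card (Quotient s) := by
  refine Nat.card_congr (Equiv.ofBijective (Quotient.map' id fun _ _ h => hle h) ⟨?_, ?_⟩)
  · rintro ⟨a⟩ ⟨b⟩ h
    refine Quotient.sound ?_
    rcases rel_or_rel_pair_of_merge hs (Quotient.exact h) with h | ⟨ha, hb⟩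
    · exact h
    · have ha : r a x := ha.elim id fun h => r.trans h (r.symm hrxy)
      have hb : r b x := hb.elim id fun h => r.trans h (r.symm hrxy)
      exact r.trans ha (r.symm hb)
  · rintro ⟨a⟩
    exact ⟨⟦a⟧, rfl⟩

theorem card_quotient_eq_add_one_of_merge [Finite α] (hle : r ≤ s) (hxy : s x y)
    (hrxy : ¬ r x y) (hs : ∀ a b, ¬ r a x → ¬ r a y → s a b → r a b) :
    Nat.card (Quotient r) = Nat.card (Quotient s) + 1 := by
  classical
  let g : {u : Quotient r // u ≠ ⟦y⟧} → Quotient s :=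
    fun u => Quotient.map' id (fun _ _ h => hle h) u.1
  have hg : g.Bijective := by
    constructor
    · rintro ⟨⟨a⟩, ha⟩ ⟨⟨b⟩, hb⟩ h
      have ha : ¬ r a y := fun h => ha (Quotient.sound h)
      have hb : ¬ r b y := fun h => hb (Quotient.sound h)
      refine Subtype.ext (Quotient.sound ?_)
      rcases rel_or_rel_pair_of_merge hs (Quotient.exact h) with h | ⟨ha', hb'⟩
      · exact h
      · exact r.trans (ha'.resolve_right ha) (r.symm (hb'.resolve_right hb))
    · rintro ⟨a⟩
      by_cases hay : r a y
      · refine ⟨⟨⟦x⟧, fun h => hrxy (Quotient.exact h)⟩, Quotient.sound ?_⟩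
        exact s.trans hxy (s.symm (hle hay))
      · exact ⟨⟨⟦a⟧, fun h => hay (Quotient.exact h)⟩, rfl⟩
  rw [← Nat.card_congr (Equiv.ofBijective g hg), ← Finite.card_option,
    Nat.card_congr (Equiv.optionSubtypeNe _)]

theorem card_quotient_le_add_one_of_merge [Finite α] (hle : r ≤ s) (hxy : s x y)
    (hs : ∀ a b, ¬ r a x → ¬ r a y → s a b → r a b) :
    Nat.card (Quotient r) ≤ Nat.card (Quotient s) + 1 := by
  by_cases hrxy : r x y
  · exact (card_quotient_eq_of_merge hle hrxy hs).trans_le (Nat.le_succ _)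
  · exact (card_quotient_eq_add_one_of_merge hle hxy hrxy hs).le

theorem card_quotient_eq_card (h : ∀ a b, r a b → a = b) : Nat.card (Quotient r) = Nat.card α :=
  (Nat.card_congr (Equiv.ofBijective _
    ⟨fun a b hab => h a b (Quotient.exact hab), Quotient.mk_surjective⟩)).symm

theorem card_quotient_add_card_le [Fintype α] (S : Finset α) (hS : ∀ a ∈ S, ∀ b ∈ S, r a b) :
    Nat.card (Quotient r) + #S ≤ Fintype.card α + 1 := by
  classical
  rcases S.eq_empty_or_nonempty with rfl | ⟨a₀, ha₀⟩
  · have := Nat.card_le_card_of_surjective _ (Quotient.mk_surjective (s := r))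
    rw [Nat.card_eq_fintype_card (α := α)] at this
    simpa using this.trans (Nat.le_succ _)
  · have hsurj : Function.Surjective fun c : ↥(insert a₀ Sᶜ) => (⟦c⟧ : Quotient r) := by
      rintro ⟨a⟩
      by_cases ha : a ∈ S
      · exact ⟨⟨a₀, mem_insert_self _ _⟩, Quotient.sound (hS a₀ ha₀ a ha)⟩
      · exact ⟨⟨a, mem_insert_of_mem (mem_compl.2 ha)⟩, rfl⟩
    have h₁ := Nat.card_le_card_of_surjective _ hsurj
    have h₂ := card_insert_le a₀ Sᶜ
    rw [Nat.card_eq_finsetCard] at h₁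
    rw [card_compl] at h₂
    have := card_le_univ S
    omega

end Setoid

namespace Equiv.Perm

variable {α : Type*} {σ : Perm α} {a b x y : α}

/-- The number of cycles of `σ`, fixed points included. -/
noncomputable def numCycles (σ : Perm α) : ℕ := Nat.card (Quotient (SameCycle.setoid σ))

theorem numCycles_one : numCycles (1 : Perm α) = Nat.card α :=
  Setoid.card_quotient_eq_card fun _ _ => sameCycle_one.1

theorem SameCycle.mem_of_mapsTo [Finite α] {C : Set α} (hC : Set.MapsTo σ C C) (ha : a ∈ C)
    (h : σ.SameCycle a b) : b ∈ C := by
  obtain ⟨i, -, rfl⟩ := h.exists_pow_eq'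
  exact hC.iterate i ha

variable [DecidableEq α] [Finite α]

theorem SameCycle.of_swap_mul (hxy : σ.SameCycle a x ↔ σ.SameCycle a y)
    (h : (swap x y * σ).SameCycle a b) : σ.SameCycle a b := by
  refine h.mem_of_mapsTo (C := {c | σ.SameCycle a c}) (fun c hc => ?_) SameCycle.rfl
  have hc : σ.SameCycle a (σ c) := sameCycle_apply_right.2 hc
  simp only [Set.mem_ofPred_eq, Perm.mul_apply, swap_apply_def]
  split_ifs with h₁ h₂
  · exact hxy.1 (h₁ ▸ hc)
  · exact hxy.2 (h₂ ▸ hc)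
  · exact hc

theorem sameCycle_swap_mul_of_not_sameCycle (h : ¬ σ.SameCycle x y) :
    (swap x y * σ).SameCycle x y := by
  -- `swap x y * σ` agrees with `σ` along the `σ`-cycle of `x` until it reaches `σ⁻¹ x`,
  -- which it sends to `y`.
  have hC : Set.MapsTo σ {c | σ.SameCycle x c → (swap x y * σ).SameCycle x c}
      {c | σ.SameCycle x c → (swap x y * σ).SameCycle x c} := by
    intro c hc hxc
    have hxc' := hc (sameCycle_apply_right.1 hxc)
    by_cases hcx : σ c = x
    · rw [hcx]
    · have hcy : σ c ≠ y := fun hcy => h (hcy ▸ hxc)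
      have : (swap x y * σ) c = σ c := swap_apply_of_ne_of_ne hcx hcy
      exact this ▸ sameCycle_apply_right.2 hxc'
  have hinv : σ.SameCycle x (σ⁻¹ x) := ⟨-1, by simp⟩
  have hx : (swap x y * σ).SameCycle x (σ⁻¹ x) :=
    SameCycle.mem_of_mapsTo hC (fun _ => SameCycle.rfl) hinv hinv
  refine hx.trans ⟨1, ?_⟩
  simp

theorem numCycles_swap_mul_add_one (h : ¬ σ.SameCycle x y) :
    numCycles (swap x y * σ) + 1 = numCycles σ := by
  have hρ := sameCycle_swap_mul_of_not_sameCycle h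
  refine (Setoid.card_quotient_eq_add_one_of_merge (s := SameCycle.setoid (swap x y * σ))
    (fun a b hab => ?_) hρ h fun a b hax hay hab => hab.of_swap_mul (iff_of_false hax hay)).symm
  refine SameCycle.of_swap_mul (x := x) (y := y)
    ⟨fun h => h.trans hρ, fun h => h.trans hρ.symm⟩ ?_
  rwa [swap_mul_self_mul]

theorem numCycles_swap_mul_le (σ : Perm α) (x y : α) :
    numCycles (swap x y * σ) ≤ numCycles σ + 1 := by
  by_cases h : σ.SameCycle x y
  · refine Setoid.card_quotient_le_add_one_of_merge (s := SameCycle.setoid σ)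
      (fun a b hab => hab.of_swap_mul ⟨fun h' => h'.trans h, fun h' => h'.trans h.symm⟩) h
      fun a b hax hay hab => ?_
    refine SameCycle.of_swap_mul (x := x) (y := y) (iff_of_false hax hay) ?_
    rwa [swap_mul_self_mul]
  · have := numCycles_swap_mul_add_one h
    omega

end Equiv.Perm

section Orbits

variable {α : Type*} {H K : Subgroup (Perm α)} {σ : Perm α} {a b x y : α}

theorem orbitRel_perm_iff : orbitRel H α a b ↔ ∃ g ∈ H, g b = a := by
  simp [orbitRel_apply, mem_orbit_iff, Perm.smul_def]

theorem orbitRel_mono (hHK : H ≤ K) : orbitRel H α ≤ orbitRel K α := fun a b h => by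
  obtain ⟨g, hg, rfl⟩ := orbitRel_perm_iff.1 h
  exact orbitRel_perm_iff.2 ⟨g, hHK hg, rfl⟩

theorem orbitRel_of_sameCycle (hσ : σ ∈ H) (h : σ.SameCycle a b) : orbitRel H α a b := by
  obtain ⟨i, rfl⟩ := h.symm
  exact orbitRel_perm_iff.2 ⟨σ ^ i, zpow_mem hσ i, rfl⟩

noncomputable def numOrbits (s : Set (Perm α)) : ℕ :=
  Nat.card (orbitRel.Quotient (closure s) α)

theorem numOrbits_empty : numOrbits (∅ : Set (Perm α)) = Nat.card α :=
  Setoid.card_quotient_eq_card fun a b h => by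
    obtain ⟨g, hg, rfl⟩ := orbitRel_perm_iff.1 h
    rw [Subgroup.closure_empty, mem_bot] at hg
    rw [hg, Perm.one_apply]

variable [DecidableEq α]

theorem orbitRel_closure_insert_swap {s : Set (Perm α)} (hax : ¬ orbitRel (closure s) α a x)
    (hay : ¬ orbitRel (closure s) α a y)
    (hab : orbitRel (closure (insert (swap x y) s)) α a b) : orbitRel (closure s) α a b := by
  let C : Set α := {c | orbitRel (closure s) α a c}
  have hstab : closure (insert (swap x y) s) ≤ stabilizer (Perm α) C := by
    refine (closure_le _).2 fun g hg => mem_stabilizer_set.2 fun c => ?_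
    rcases hg with rfl | hg
    · simp only [Perm.smul_def, swap_apply_def]
      split_ifs with hcx hcy
      · exact iff_of_false hay (hcx ▸ hax)
      · exact iff_of_false hax (hcy ▸ hay)
      · rfl
    · have hc : orbitRel (closure s) α (g • c) c :=
        orbitRel_perm_iff.2 ⟨g, subset_closure hg, rfl⟩
      exact ⟨fun h => (orbitRel _ α).trans h hc, fun h => (orbitRel _ α).trans h
        ((orbitRel _ α).symm hc)⟩
  obtain ⟨g, hg, rfl⟩ := orbitRel_perm_iff.1 hab
  exact (mem_stabilizer_set.1 (hstab hg) b).1 ((orbitRel _ α).refl _)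

theorem numOrbits_insert_swap_of_orbitRel {s : Set (Perm α)} (h : orbitRel (closure s) α x y) :
    numOrbits (insert (swap x y) s) = numOrbits s :=
  (Setoid.card_quotient_eq_of_merge (orbitRel_mono (closure_mono (Set.subset_insert _ _))) h
    fun _ _ => orbitRel_closure_insert_swap).symm

theorem numOrbits_le_numOrbits_insert_swap_add_one [Finite α] (s : Set (Perm α)) (x y : α) :
    numOrbits s ≤ numOrbits (insert (swap x y) s) + 1 :=
  Setoid.card_quotient_le_add_one_of_merge (orbitRel_mono (closure_mono (Set.subset_insert _ _)))
    (orbitRel_perm_iff.2 ⟨swap x y, subset_closure (Set.mem_insert _ _), swap_apply_right x y⟩)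
    fun _ _ => orbitRel_closure_insert_swap

end Orbits

section Hurwitz

variable {α : Type*} [DecidableEq α]

theorem card_add_numCycles_prod_le [Finite α] (l : List (Perm α)) (hl : ∀ τ ∈ l, τ.IsSwap) :
    Nat.card α + numCycles l.prod ≤ l.length + 2 * numOrbits {τ | τ ∈ l} := by
  induction l with
  | nil => simp [numCycles_one, numOrbits_empty, two_mul]
  | cons t l ih =>
    obtain ⟨x, y, -, rfl⟩ := hl t List.mem_cons_self
    have ih := ih fun τ hτ => hl τ (List.mem_cons_of_mem _ hτ)
    have hset : {τ | τ ∈ swap x y :: l} = insert (swap x y) {τ | τ ∈ l} := by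
      ext; simp
    rw [List.prod_cons, List.length_cons, hset]
    by_cases h : orbitRel (closure {τ | τ ∈ l}) α x y
    · have := numCycles_swap_mul_le l.prod x y
      rw [numOrbits_insert_swap_of_orbitRel h]
      omega
    · have hπ : l.prod ∈ closure {τ | τ ∈ l} := list_prod_mem fun τ hτ => subset_closure hτ
      have := numCycles_swap_mul_add_one fun hc => h (orbitRel_of_sameCycle hπ hc)
      have := numOrbits_le_numOrbits_insert_swap_add_one {τ | τ ∈ l} x y
      omega

theorem two_mul_card_le_length_add_two [Fintype α] (l : List (Perm α)) (hl : ∀ τ ∈ l, τ.IsSwap)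
    (h1 : l.prod = 1) (S : Finset α)
    (hS : ∀ a ∈ S, ∀ b ∈ S, orbitRel (closure {τ | τ ∈ l}) α a b) :
    2 * #S ≤ l.length + 2 := by
  have h := card_add_numCycles_prod_le l hl
  have hS : numOrbits {τ | τ ∈ l} + #S ≤ _ := Setoid.card_quotient_add_card_le S hS
  rw [h1, numCycles_one, Nat.card_eq_fintype_card] at h
  omega

theorem List.Nodup.exists_swaps_prod_eq_formPerm :
    ∀ {l : List α}, l.Nodup → ∃ L : List (Equiv.Perm α),
      (∀ τ ∈ L, τ.IsSwap) ∧ L.prod = l.formPerm ∧ L.length = l.length - 1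
  | [], _ => ⟨[], by simp⟩
  | [_], _ => ⟨[], by simp⟩
  | x :: y :: l, hl => by
    obtain ⟨L, hL, hprod, hlen⟩ := (List.nodup_cons.1 hl).2.exists_swaps_prod_eq_formPerm
    have hxy : x ≠ y := fun h => (List.nodup_cons.1 hl).1 (h ▸ List.mem_cons_self)
    refine ⟨Equiv.swap x y :: L, ?_, by simp [hprod], by simp [hlen]⟩
    rintro τ (_ | ⟨_, hτ⟩)
    exacts [⟨x, y, hxy, rfl⟩, hL τ hτ]

variable [Fintype α]

theorem Equiv.Perm.IsCycle.exists_swaps_prod_eq {σ : Perm α} (hσ : σ.IsCycle) :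
    ∃ L : List (Perm α), (∀ τ ∈ L, τ.IsSwap) ∧ L.prod = σ ∧ L.length = #σ.support - 1 := by
  obtain ⟨x, hx, -⟩ := id hσ
  obtain ⟨L, hL, hprod, hlen⟩ := List.Nodup.exists_swaps_prod_eq_formPerm (nodup_toList σ x)
  refine ⟨L, hL, ?_, ?_⟩
  · rw [hprod, formPerm_toList, hσ.cycleOf_eq hx]
  · rw [hlen, length_toList, hσ.cycleOf_eq hx]

theorem exists_swaps_prod_eq_prod_of_isCycle (l : List (Perm α)) (hl : ∀ g ∈ l, g.IsCycle) :
    ∃ L : List (Perm α), (∀ τ ∈ L, τ.IsSwap) ∧ L.prod = l.prod ∧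
      L.length = (l.map fun g => #g.support - 1).sum ∧
      closure {g | g ∈ l} ≤ closure {τ | τ ∈ L} := by
  induction l with
  | nil => exact ⟨[], by simp⟩
  | cons g l ih =>
    obtain ⟨L, hL, hprod, hlen, hcl⟩ := ih fun g hg => hl g (List.mem_cons_of_mem _ hg)
    obtain ⟨M, hM, hMprod, hMlen⟩ := (hl g List.mem_cons_self).exists_swaps_prod_eq
    refine ⟨M ++ L, ?_, by simp [hprod, hMprod], by simp [hlen, hMlen], ?_⟩
    · simpa [or_imp, forall_and] using ⟨hM, hL⟩
    · refine (closure_le _).2 fun h hh => ?_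
      rcases List.mem_cons.1 hh with rfl | hh
      · exact hMprod ▸ list_prod_mem fun τ hτ => subset_closure (List.mem_append_left _ hτ)
      · exact closure_mono (fun τ hτ => List.mem_append_right _ hτ) (hcl (subset_closure hh))

theorem two_mul_card_le_sum_add_two (l : List (Perm α)) (hl : ∀ g ∈ l, g.IsCycle)
    (h1 : l.prod = 1) (S : Finset α)
    (hS : ∀ a ∈ S, ∀ b ∈ S, orbitRel (closure {g | g ∈ l}) α a b) :
    2 * #S ≤ (l.map fun g => #g.support - 1).sum + 2 := by
  obtain ⟨L, hL, hprod, hlen, hcl⟩ := exists_swaps_prod_eq_prod_of_isCycle l hl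
  exact hlen ▸ two_mul_card_le_length_add_two L hL (hprod ▸ h1) S
    fun a ha b hb => orbitRel_mono hcl (hS a ha b hb)

end Hurwitz

section Family

variable {α ι : Type*}

theorem prod_map_eq_prod_filter_mul_prod_filter_not (w : ι → Perm α) (p : ι → Bool)
    (h : ∀ i j, p i → ¬ p j → Commute (w i) (w j)) (l : List ι) :
    (l.map w).prod = ((l.filter p).map w).prod * ((l.filter (!p ·)).map w).prod := by
  induction l with
  | nil => simp
  | cons a l ih =>
    by_cases ha : p a
    · simp [ha, ih, mul_assoc]
    · have hcomm : Commute (w a) ((l.filter p).map w).prod :=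
        Commute.list_prod_right _ _ fun g hg => by
          obtain ⟨j, hj, rfl⟩ := List.mem_map.1 hg
          exact (h j a (List.mem_filter.1 hj).2 ha).symm
      simp [ha, ih, ← mul_assoc, hcomm.eq]

theorem eq_or_eq_of_mem_support [Fintype ι] [DecidableEq α] [Fintype α] {w : ι → Perm α}
    {i j m : ι} {a : α} (h2 : #{j | a ∈ (w j).support} ≤ 2) (hij : i ≠ j)
    (hi : a ∈ (w i).support) (hj : a ∈ (w j).support) (hm : a ∈ (w m).support) :
    m = i ∨ m = j := by
  classical
  by_contra! h
  exact h2.not_gt <| two_lt_card.2 ⟨i, by simpa using hi, j, by simpa using hj, m,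
    by simpa using hm, hij, Ne.symm h.1, Ne.symm h.2⟩

variable {k : ℕ}

def prodOn (w : Fin k → Perm α) (T : Finset (Fin k)) : Perm α :=
  (((List.finRange k).filter (· ∈ T)).map w).prod

variable {w : Fin k → Perm α} {T : Finset (Fin k)} {i j : Fin k}

theorem prod_ofFn_eq_prodOn_mul_prodOn_compl (hT : ∀ i ∈ T, ∀ j ∉ T, (w i).Disjoint (w j)) :
    (List.ofFn w).prod = prodOn w T * prodOn w Tᶜ := by
  rw [List.ofFn_eq_map, prod_map_eq_prod_filter_mul_prod_filter_not w (· ∈ T)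
    fun i j hi hj => (hT i (by simpa using hi) j (by simpa using hj)).commute]
  simp [prodOn]

theorem disjoint_prodOn_compl (hT : ∀ i ∈ T, ∀ j ∉ T, (w i).Disjoint (w j)) (hi : i ∈ T) :
    (w i).Disjoint (prodOn w Tᶜ) :=
  disjoint_prod_right _ fun g hg => by
    obtain ⟨j, hj, rfl⟩ := List.mem_map.1 hg
    exact hT i hi j (by simpa using (List.mem_filter.1 hj).2)

theorem prodOn_eq_one_of_prod_ofFn_eq_one (hT : ∀ i ∈ T, ∀ j ∉ T, (w i).Disjoint (w j))
    (h1 : (List.ofFn w).prod = 1) : prodOn w T = 1 := by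
  have hd : (prodOn w T).Disjoint (prodOn w Tᶜ) :=
    (disjoint_prod_right _ fun g hg => by
      obtain ⟨j, hj, rfl⟩ := List.mem_map.1 hg
      exact (disjoint_prodOn_compl hT (by simpa using (List.mem_filter.1 hj).2)).symm).symm
  rw [prod_ofFn_eq_prodOn_mul_prodOn_compl hT] at h1
  exact (hd.mul_eq_one_iff.1 h1).1

theorem prodOn_pair (hij : i ≠ j) :
    prodOn w {i, j} = w i * w j ∨ prodOn w {i, j} = w j * w i := by
  set l := (List.finRange k).filter (· ∈ ({i, j} : Finset (Fin k)))
  have hl : l.Nodup := (List.nodup_finRange k).filter _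
  have hlT : l.toFinset = {i, j} := by ext; simp [l]
  obtain ⟨u, v, huv⟩ : ∃ u v, l = [u, v] := by
    apply List.length_eq_two.1
    rw [← List.toFinset_card_of_nodup hl, hlT, card_pair hij]
  have hu : u ∈ ({i, j} : Finset (Fin k)) := hlT ▸ by simp [huv]
  have hv : v ∈ ({i, j} : Finset (Fin k)) := hlT ▸ by simp [huv]
  have hne : u ≠ v := by simpa [huv] using hl
  change (l.map w).prod = _ ∨ (l.map w).prod = _
  simp only [mem_insert, mem_singleton] at hu hv
  rcases hu with rfl | rfl <;> rcases hv with rfl | rfl <;> simp_all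

theorem prodOn_pair_eq_one_iff (hij : i ≠ j) : prodOn w {i, j} = 1 ↔ w j = (w i)⁻¹ := by
  rcases prodOn_pair (w := w) hij with h | h <;> rw [h]
  exacts [mul_eq_one_iff_eq_inv', mul_eq_one_iff_eq_inv]

theorem two_mul_card_le_sum_of_prodOn_eq_one [DecidableEq α] [Fintype α]
    (hcyc : ∀ j ∈ T, (w j).IsCycle) (hP : prodOn w T = 1) (S : Finset α)
    (hS : ∀ a ∈ S, ∀ b ∈ S, orbitRel (closure (w '' T)) α a b) :
    2 * #S ≤ ∑ j ∈ T, (#(w j).support - 1) + 2 := by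
  set l := ((List.finRange k).filter (· ∈ T)).map w
  have hl : {g | g ∈ l} = w '' T := by ext; simp [l]
  have hsum : (l.map fun g => #g.support - 1).sum = ∑ j ∈ T, (#(w j).support - 1) := by
    rw [List.map_map, ← List.sum_toFinset _ ((List.nodup_finRange k).filter _)]
    congr 1
    ext; simp
  rw [← hsum]
  refine two_mul_card_le_sum_add_two l (fun g hg => ?_) hP S (hl ▸ hS)
  obtain ⟨j, hj, rfl⟩ := List.mem_map.1 hg
  exact hcyc j (by simpa using (List.mem_filter.1 hj).2)

end Family

section Component

variable {α ι : Type*} [Fintype ι] {w : ι → Perm α} {i j : ι} {a b : α}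

open Classical in
noncomputable def component (w : ι → Perm α) (i : ι) : Finset ι :=
  {j | Relation.ReflTransGen (fun p q => ¬ (w p).Disjoint (w q)) i j}

theorem mem_component :
    j ∈ component w i ↔ Relation.ReflTransGen (fun p q => ¬ (w p).Disjoint (w q)) i j := by
  simp [component]

theorem mem_component_self : i ∈ component w i :=
  mem_component.2 .refl

theorem disjoint_of_mem_component (w : ι → Perm α) (i : ι) :
    ∀ j ∈ component w i, ∀ m ∉ component w i, (w j).Disjoint (w m) := fun _ hj _ hm =>
  by_contra fun h => hm (mem_component.2 ((mem_component.1 hj).tail h))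

variable [DecidableEq α] [Fintype α]

theorem orbitRel_of_mem_component (hcyc : ∀ j, (w j).IsCycle) (hj : j ∈ component w i)
    (ha : a ∈ (w i).support) (hb : b ∈ (w j).support) :
    orbitRel (closure (w '' component w i)) α a b := by
  have hcycle : ∀ j ∈ component w i, ∀ a ∈ (w j).support, ∀ b ∈ (w j).support,
      orbitRel (closure (w '' component w i)) α a b := fun j hj a ha b hb =>
    orbitRel_of_sameCycle (subset_closure ⟨j, hj, rfl⟩)
      ((hcyc j).sameCycle (mem_support.1 ha) (mem_support.1 hb))
  induction mem_component.1 hj generalizing b with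
  | refl => exact hcycle i mem_component_self a ha b hb
  | @tail p q hp hpq ih =>
    obtain ⟨c, hcp, hcq⟩ := Finset.not_disjoint_iff.1 (mt disjoint_iff_disjoint_support.2 hpq)
    exact (orbitRel _ α).trans (ih (mem_component.2 hp) hcp)
      (hcycle q (mem_component.2 (hp.tail hpq)) c hcq b hb)

theorem orbitRel_of_mem_biUnion_component (hcyc : ∀ j, (w j).IsCycle)
    (ha : a ∈ (component w i).biUnion fun j => (w j).support)
    (hb : b ∈ (component w i).biUnion fun j => (w j).support) :
    orbitRel (closure (w '' component w i)) α a b := by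
  obtain ⟨c, hc⟩ := (hcyc i).nonempty_support
  obtain ⟨p, hp, hap⟩ := mem_biUnion.1 ha
  obtain ⟨q, hq, hbq⟩ := mem_biUnion.1 hb
  exact (orbitRel _ α).trans ((orbitRel _ α).symm (orbitRel_of_mem_component hcyc hp hc hap))
    (orbitRel_of_mem_component hcyc hq hc hbq)

theorem sum_card_support_eq_two_mul_card_biUnion [DecidableEq ι] {T : Finset ι}
    (h2 : ∀ a i, a ∈ (w i).support → #{j | a ∈ (w j).support} = 2)
    (hT : ∀ i ∈ T, ∀ j ∉ T, (w i).Disjoint (w j)) :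
    ∑ i ∈ T, #(w i).support = 2 * #(T.biUnion fun i => (w i).support) := by
  set S := T.biUnion fun i => (w i).support
  have h := sum_card_bipartiteAbove_eq_sum_card_bipartiteBelow (s := T) (t := S)
    (r := fun i a => a ∈ (w i).support)
  have habove : ∀ i ∈ T,
      #(S.bipartiteAbove (fun i a => a ∈ (w i).support) i) = #(w i).support := fun i hi => by
    rw [bipartiteAbove, filter_mem_eq_inter, inter_eq_right.2 (subset_biUnion_of_mem _ hi)]
  have hbelow : ∀ a ∈ S, #(T.bipartiteBelow (fun i a => a ∈ (w i).support) a) = 2 := by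
    intro a ha
    obtain ⟨i, hi, hai⟩ := mem_biUnion.1 ha
    rw [← h2 a i hai, bipartiteBelow]
    congr 1
    ext j
    simp only [mem_filter, mem_univ, true_and, and_iff_right_iff_imp]
    intro haj
    by_contra hj
    exact Finset.disjoint_left.1 (disjoint_iff_disjoint_support.1 (hT i hi j hj)) hai haj
  rwa [sum_congr rfl habove, sum_congr rfl hbelow, sum_const, smul_eq_mul, mul_comm] at h

end Component

section Pairing

variable {α : Type*} [DecidableEq α] [Fintype α] {k : ℕ} {w : Fin k → Perm α} {i j : Fin k}

theorem card_component_le_two (hcyc : ∀ i, (w i).IsCycle)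
    (h2 : ∀ a i, a ∈ (w i).support → #{j | a ∈ (w j).support} = 2)
    (h1 : (List.ofFn w).prod = 1) (i : Fin k) : #(component w i) ≤ 2 := by
  have hT := disjoint_of_mem_component w i
  have hbound := two_mul_card_le_sum_of_prodOn_eq_one (fun j _ => hcyc j)
    (prodOn_eq_one_of_prod_ofFn_eq_one hT h1) _ fun _ ha _ hb =>
      orbitRel_of_mem_biUnion_component hcyc ha hb
  have hcount := sum_card_support_eq_two_mul_card_biUnion h2 hT
  have hsub : ∑ j ∈ component w i, (#(w j).support - 1) + #(component w i) =
      ∑ j ∈ component w i, #(w j).support := by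
    rw [card_eq_sum_ones, ← sum_add_distrib]
    exact sum_congr rfl fun j _ =>
      Nat.sub_add_cancel (one_le_two.trans (hcyc j).two_le_card_support)
  omega

theorem exists_inv_of_prod_ofFn_eq_one (hcyc : ∀ i, (w i).IsCycle)
    (h2 : ∀ a i, a ∈ (w i).support → #{j | a ∈ (w j).support} = 2)
    (h1 : (List.ofFn w).prod = 1) (i : Fin k) : ∃ j ≠ i, w j = (w i)⁻¹ := by
  obtain ⟨a, ha⟩ := (hcyc i).nonempty_support
  obtain ⟨j, hj, hji⟩ := exists_mem_ne (by rw [h2 a i ha]; norm_num) i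
  have hjT : j ∈ component w i := mem_component.2 <| .single fun hd =>
    Finset.disjoint_left.1 (disjoint_iff_disjoint_support.1 hd) ha (mem_filter.1 hj).2
  have hT : component w i = {i, j} := by
    refine (eq_of_subset_of_card_le (insert_subset mem_component_self
      (singleton_subset_iff.2 hjT)) ?_).symm
    rw [card_pair hji.symm]
    exact card_component_le_two hcyc h2 h1 i
  have hP := prodOn_eq_one_of_prod_ofFn_eq_one (disjoint_of_mem_component w i) h1
  exact ⟨j, hji, (prodOn_pair_eq_one_iff hji.symm).1 (hT ▸ hP)⟩

theorem disjoint_of_mem_pair_of_notMem_pair (h2 : ∀ a, #{j | a ∈ (w j).support} ≤ 2)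
    (hji : j ≠ i) (hj : w j = (w i)⁻¹) :
    ∀ p ∈ ({i, j} : Finset (Fin k)), ∀ m ∉ ({i, j} : Finset (Fin k)), (w p).Disjoint (w m) := by
  have hsupp : (w j).support = (w i).support := by rw [hj, support_inv]
  intro p hp m hm
  have hp : (w p).support = (w i).support := by
    rcases mem_insert.1 hp with rfl | hp
    · rfl
    · rw [mem_singleton.1 hp, hsupp]
  refine disjoint_iff_disjoint_support.2 (Finset.disjoint_left.2 fun b hbp hbm => hm ?_)
  rw [hp] at hbp
  rcases eq_or_eq_of_mem_support (h2 b) hji.symm hbp (hsupp ▸ hbp) hbm with rfl | rfl <;> simp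

theorem prod_ofFn_eq_one_of_forall_exists_inv (h2 : ∀ a, #{j | a ∈ (w j).support} ≤ 2)
    (hw : ∀ i, ∃ j ≠ i, w j = (w i)⁻¹) : (List.ofFn w).prod = 1 := by
  ext a
  by_cases ha : ∃ i, a ∈ (w i).support
  · obtain ⟨i, hi⟩ := ha
    obtain ⟨j, hji, hj⟩ := hw i
    have hT := disjoint_of_mem_pair_of_notMem_pair h2 hji hj
    have hfix : prodOn w ({i, j} : Finset (Fin k))ᶜ a = a :=
      ((disjoint_prodOn_compl hT (mem_insert_self i _)) a).resolve_left (mem_support.1 hi)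
    rw [prod_ofFn_eq_prodOn_mul_prodOn_compl hT, (prodOn_pair_eq_one_iff hji.symm).2 hj, one_mul,
      hfix, Perm.one_apply]
  · push Not at ha
    have : (List.ofFn w).prod ∈ stabilizer (Perm α) a :=
      list_prod_mem fun g hg => by
        obtain ⟨i, rfl⟩ := List.mem_ofFn.1 hg
        simpa using ha i
    simpa using this

end Pairing

/-- Let `w = (w 1, …, w k)` be a tuple of cycles in `S_n` such that every point
is moved by either none or exactly two of the cycles.  Then the product
`w 1 ⋯ w k` is the identity if and only if the cycles can be perfectly paired:
for every index `i` there is a unique index `i' ≠ i` with `w i' = (w i)⁻¹`. -/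
theorem prod_eq_one_iff_paired (n k : ℕ) (w : Fin k → Equiv.Perm (Fin n))
    (hcyc : ∀ i, (w i).IsCycle)
    (hsym : ∀ a : Fin n,
      Nat.card {i // a ∈ (w i).support} = 0 ∨ Nat.card {i // a ∈ (w i).support} = 2) :
    (List.ofFn w).prod = 1 ↔ ∀ i, ∃! i', i' ≠ i ∧ w i' = (w i)⁻¹ := by
  have hsym' (a : Fin n) : #{i | a ∈ (w i).support} = 0 ∨ #{i | a ∈ (w i).support} = 2 := by
    simpa [Nat.card_eq_fintype_card, Fintype.card_subtype] using hsym a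
  have hle (a : Fin n) : #{i | a ∈ (w i).support} ≤ 2 := by
    rcases hsym' a with h | h <;> omega
  have h2 (a : Fin n) (i : Fin k) (ha : a ∈ (w i).support) : #{j | a ∈ (w j).support} = 2 :=
    (hsym' a).resolve_left (card_ne_zero.2 ⟨i, by simpa using ha⟩)
  refine ⟨fun h1 i => ?_, fun hpair => prod_ofFn_eq_one_of_forall_exists_inv hle
    fun i => (hpair i).exists⟩
  obtain ⟨j, hji, hj⟩ := exists_inv_of_prod_ofFn_eq_one hcyc h2 h1 i
  refine ⟨j, ⟨hji, hj⟩, fun m ⟨hmi, hm⟩ => ?_⟩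
  obtain ⟨a, ha⟩ := (hcyc i).nonempty_support
  have hinv : a ∈ (w i)⁻¹.support := by rwa [support_inv]
  exact (eq_or_eq_of_mem_support (hle a) hji.symm ha (hj ▸ hinv) (hm ▸ hinv)).resolve_left hmi
end

section
/- Fix q ≥ 2 and an odd positive integer k. Let B_n denote the number of k-tuples of q-cycles in S_n whose product is the identity. Then lim_{n→∞} B_n · (q/n^q)^{k/2} = 0. Moreover, if q is even then B_n = 0 for all n. -/
/-!
For even `q` every `q`-cycle is an odd permutation, so a product of an odd number of them is odd
and cannot be the identity.

For odd `q`, write `k q = 2 M + 1`. A point moved by exactly one factor of a product of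
permutations is moved by the product, so if the product is the identity, every point moved by one
of the `k` cycles is moved by at least two of them; double counting then shows that together they
move at most `M` points. Such a tuple is determined by an `M`-set containing all moved points and
`k` permutations of that set, so `B n ≤ n ^ M (M !) ^ k`, whereas `(q / n ^ q) ^ (k / 2)` decays
like `n ^ (-(2 M + 1) / 2)`.
-/

open Equiv Finset Filter Topology
open scoped Nat

variable {α : Type*}

namespace List

theorem prod_apply_eq_self_of_forall {l : List (Equiv.Perm α)} {x : α}
    (h : ∀ g ∈ l, g x = x) : l.prod x = x :=
  (MulAction.stabilizer (Equiv.Perm α) x).list_prod_mem h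

theorem prod_apply_ne_self_of_countP_eq_one [DecidableEq α] {l : List (Equiv.Perm α)} {x : α}
    (h : l.countP (fun g => g x ≠ x) = 1) : l.prod x ≠ x := by
  induction l with
  | nil => simp at h
  | cons g l ih =>
    rw [prod_cons, Equiv.Perm.mul_apply]
    by_cases hg : g x = x
    · rw [countP_cons_of_neg (by simpa using hg)] at h
      exact fun hx => ih h (g.injective (hx.trans hg.symm))
    · rw [countP_cons_of_pos (by simpa using hg), add_eq_right, countP_eq_zero] at h
      rw [prod_apply_eq_self_of_forall (by simpa using h)]
      exact hg

theorem countP_ofFn {β : Type*} {k : ℕ} (t : Fin k → β) (p : β → Prop) [DecidablePred p] :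
    (ofFn t).countP p = #{j | p (t j)} := by
  rw [ofFn_eq_map, countP_map, countP_eq_length_filter, Finset.card_def, Finset.filter_val,
    Finset.val_univ_fin, Multiset.filter_coe, Multiset.coe_card]
  rfl

end List

namespace Equiv.Perm

variable [DecidableEq α] {k : ℕ}

theorem two_le_card_apply_ne_of_prod_ofFn_eq_one {t : Fin k → Perm α}
    (hprod : (List.ofFn t).prod = 1) {x : α} {j : Fin k} (hx : t j x ≠ x) :
    2 ≤ #{i | t i x ≠ x} := by
  have hpos : 0 < #{i | t i x ≠ x} := card_pos.mpr ⟨j, by simpa using hx⟩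
  by_contra! hlt
  have hone : (List.ofFn t).countP (fun g => g x ≠ x) = 1 := by
    rw [List.countP_ofFn]
    omega
  exact List.prod_apply_ne_self_of_countP_eq_one hone (by rw [hprod]; rfl)

variable [Fintype α]

theorem card_biUnion_support_mul_two_le {q : ℕ} {t : Fin k → Perm α}
    (hprod : (List.ofFn t).prod = 1) (hq : ∀ j, #(t j).support ≤ q) :
    #(univ.biUnion fun j => (t j).support) * 2 ≤ k * q := by
  simpa using card_mul_le_card_mul (fun (x : α) (j : Fin k) => x ∈ (t j).support)
    (s := univ.biUnion fun j => (t j).support) (t := univ)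
    (fun x hx => by
      obtain ⟨j, -, hj⟩ := mem_biUnion.mp hx
      simpa [bipartiteAbove] using
        two_le_card_apply_ne_of_prod_ofFn_eq_one hprod (mem_support.mp hj))
    (fun j _ => (card_le_card fun x hx => (mem_filter.mp hx).2).trans (hq j))

theorem card_filter_support_subset (s : Finset α) :
    #{σ : Perm α | σ.support ⊆ s} = (#s)! := by
  rw [← Fintype.card_subtype, ← Fintype.card_coe s, ← Fintype.card_perm]
  refine Fintype.card_congr ((Perm.subtypeEquivSubtypePerm (· ∈ s)).trans
    (Equiv.subtypeEquivRight fun σ => ?_)).symm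
  simp only [subset_iff, mem_support]
  exact forall_congr' fun _ => not_imp_comm

theorem card_filter_card_biUnion_support_le {m : ℕ} (hm : m ≤ Fintype.card α) :
    #{t : Fin k → Perm α | #(univ.biUnion fun j => (t j).support) ≤ m} ≤
      Fintype.card α ^ m * m ! ^ k := by
  calc _ ≤ #((powersetCard m univ).biUnion fun s =>
          Fintype.piFinset fun _ : Fin k => {σ : Perm α | σ.support ⊆ s}) := by
        refine card_le_card fun t ht => ?_
        obtain ⟨s, hsub, hs⟩ := exists_superset_card_eq (mem_filter.mp ht).2 hm
        simp only [mem_biUnion, mem_powersetCard, Fintype.mem_piFinset, mem_filter, mem_univ,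
          true_and]
        exact ⟨s, ⟨subset_univ s, hs⟩,
          fun j => (subset_biUnion_of_mem _ (mem_univ j)).trans hsub⟩
    _ ≤ ∑ s ∈ powersetCard m univ, m ! ^ k := by
        refine card_biUnion_le.trans (sum_le_sum fun s hs => ?_)
        rw [Fintype.card_piFinset, prod_const, card_filter_support_subset,
          (mem_powersetCard.mp hs).2, card_univ, Fintype.card_fin]
    _ ≤ Fintype.card α ^ m * m ! ^ k := by
        rw [sum_const, card_powersetCard, card_univ, smul_eq_mul]
        exact Nat.mul_le_mul_right _ (Nat.choose_le_pow _ _)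

theorem sign_prod_ofFn_of_isCycle {q : ℕ} {t : Fin k → Perm α}
    (ht : ∀ j, (t j).IsCycle ∧ #(t j).support = q) :
    sign (List.ofFn t).prod = (-(-1) ^ q) ^ k := by
  rw [MonoidHom.map_list_prod, List.map_ofFn, List.prod_ofFn]
  simp [(ht _).1.sign, (ht _).2]

end Equiv.Perm

theorem tendsto_natCast_pow_mul_div_pow_rpow_atTop {M q : ℕ} {c s : ℝ} (hc : 0 ≤ c)
    (h : (M : ℝ) < q * s) :
    Tendsto (fun n : ℕ => (n : ℝ) ^ M * (c / (n : ℝ) ^ q) ^ s) atTop (𝓝 0) := by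
  have hlim := ((tendsto_rpow_neg_atTop (sub_pos.mpr h)).comp
    tendsto_natCast_atTop_atTop).const_mul (c ^ s)
  rw [mul_zero] at hlim
  refine hlim.congr' ((eventually_gt_atTop 0).mono fun n hn => ?_)
  have hn : (0 : ℝ) < n := Nat.cast_pos.mpr hn
  dsimp only [Function.comp_apply]
  rw [neg_sub, Real.rpow_sub hn, Real.div_rpow hc (by positivity), ← Real.rpow_natCast _ q,
    ← Real.rpow_mul hn.le, Real.rpow_natCast]
  ring

section CycleTuples

variable (α) [DecidableEq α] [Fintype α] (k q : ℕ)

abbrev CycleTuplesProdOne : Type _ :=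
  {t : Fin k → Perm α //
    (∀ j, (t j).IsCycle ∧ #(t j).support = q) ∧ (List.ofFn t).prod = 1}

variable {α k q}

theorem card_cycleTuplesProdOne_eq_zero (hq : Even q) (hk : Odd k) :
    Nat.card (CycleTuplesProdOne α k q) = 0 := by
  refine Nat.card_eq_zero.mpr (.inl ⟨fun ⟨t, ht, hprod⟩ => ?_⟩)
  have hsign := Perm.sign_prod_ofFn_of_isCycle ht
  rw [hprod, hq.neg_one_pow, hk.neg_pow, one_pow, map_one] at hsign
  exact absurd hsign (by decide)

theorem card_cycleTuplesProdOne_le {M : ℕ} (hM : k * q = 2 * M + 1)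
    (hMα : M ≤ Fintype.card α) :
    Nat.card (CycleTuplesProdOne α k q) ≤ Fintype.card α ^ M * M ! ^ k := by
  refine le_trans ?_ ((Nat.card_eq_finsetCard _).trans_le
    (Perm.card_filter_card_biUnion_support_le hMα))
  refine Nat.card_le_card_of_injective (fun t => ⟨t.1, ?_⟩)
    fun t u h => by simpa [Subtype.ext_iff] using h
  have hcard := Perm.card_biUnion_support_mul_two_le t.2.2 fun j => (t.2.1 j).2.le
  rw [hM] at hcard
  simp only [mem_filter, mem_univ, true_and]
  omega

end CycleTuples

theorem clt_odd_moment_qcycles_general (q k : ℕ) (hk : Odd k) :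
    Filter.Tendsto
      (fun n : ℕ =>
        (Nat.card {t : Fin k → Equiv.Perm (Fin n) //
            (∀ j, (t j).IsCycle ∧ (t j).support.card = q) ∧
            (List.ofFn t).prod = 1} : ℝ) *
          ((q : ℝ) / (n : ℝ) ^ q) ^ ((k : ℝ) / 2))
      Filter.atTop (nhds 0) ∧
    (Even q → ∀ n : ℕ,
      Nat.card {t : Fin k → Equiv.Perm (Fin n) //
          (∀ j, (t j).IsCycle ∧ (t j).support.card = q) ∧
          (List.ofFn t).prod = 1} = 0) := by
  have hB_even (hq : Even q) (n : ℕ) : Nat.card (CycleTuplesProdOne (Fin n) k q) = 0 :=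
    card_cycleTuplesProdOne_eq_zero hq hk
  refine ⟨?_, hB_even⟩
  rcases Nat.even_or_odd q with hq | hq
  · simp [hB_even hq]
  obtain ⟨M, hM⟩ := hk.mul hq
  have hMkq : (M : ℝ) < q * (k / 2) := by
    have hkq : (k : ℝ) * q = 2 * M + 1 := by exact_mod_cast hM
    linarith
  have hlim := (tendsto_natCast_pow_mul_div_pow_rpow_atTop (Nat.cast_nonneg q) hMkq).const_mul
    ((M ! : ℝ) ^ k)
  rw [mul_zero] at hlim
  refine squeeze_zero' (.of_forall fun n => by positivity) ?_ hlim
  filter_upwards [eventually_ge_atTop M] with n hn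
  have hB : (Nat.card (CycleTuplesProdOne (Fin n) k q) : ℝ) ≤ n ^ M * M ! ^ k := by
    exact_mod_cast Fintype.card_fin n ▸ card_cycleTuplesProdOne_le hM (by simpa using hn)
  rw [mul_left_comm, ← mul_assoc]
  gcongr

/-- For fixed `q ≥ 2` and odd `k`, if `B n` is the number of `k`-tuples of
`q`-cycles in `S_n` whose product is the identity, then
`B n · (q/n^q)^{k/2} → 0` as `n → ∞`; moreover if `q` is even then `B n = 0`
for all `n`. -/
theorem clt_odd_moment_qcycles (q k : ℕ) (hq : 2 ≤ q) (hk : Odd k) :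
    Filter.Tendsto
      (fun n : ℕ =>
        (Nat.card {t : Fin k → Equiv.Perm (Fin n) //
            (∀ j, (t j).IsCycle ∧ (t j).support.card = q) ∧
            (List.ofFn t).prod = 1} : ℝ) *
          ((q : ℝ) / (n : ℝ) ^ q) ^ ((k : ℝ) / 2))
      Filter.atTop (nhds 0) ∧
    (Even q → ∀ n : ℕ,
      Nat.card {t : Fin k → Equiv.Perm (Fin n) //
          (∀ j, (t j).IsCycle ∧ (t j).support.card = q) ∧
          (List.ofFn t).prod = 1} = 0) :=
  clt_odd_moment_qcycles_general q k hk
end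

section
/- Under the conjugacy measure on partitions of n, the probability that a random partition λ satisfies χ^λ(δ) ≠ 0 for the class of a fixed non-trivial cycle type δ contributes negligibly in the sense: Σ over partitions δ of n not of the form (1,1,...,1) of (c(δ)/n!)·B_{n,ν,k,δ}·(d(ν)c(ν)/n^{n(ν)})^{k/2} tends to 0 as n → ∞, where B_{n,ν,k,δ} counts k-tuples of permutations of cycle type ν in S_n with product of cycle type δ. -/
/-!
Write `μ` for the non-trivial parts of `δ`, `m = |μ| ≥ 2`, and `q = k·n(ν)`. In a `k`-tuple of
permutations of cycle type `ν` with product of cycle type `δ`, the points moved by exactly one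
factor are moved by the product, so at most `(m + q)/2` points are moved at all; hence
`B_{n,ν,k,δ} ≤ n^{(m+q)/2} q!^k`. Since `c(δ) = (n-m)! c(μ)` and `(n-m)!/n! ≤ (n-q)^{-m}`, the
summand of `δ` is `O((√n/(n-q))^m) = O(1/n)`, uniformly in `δ`; it vanishes unless `m ≤ q`, and
the partitions `δ` of `n` with `m ≤ q` are determined by `μ`, so there are boundedly many of them.
-/

open Equiv Finset Filter
open scoped Nat

/-- `c(μ) = ∏_i l_i(μ)! · i^{l_i(μ)}` for a multiset `μ` of parts. -/
def cPart (mu : Multiset ℕ) : ℕ :=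
  ∏ i ∈ mu.toFinset, Nat.factorial (mu.count i) * i ^ mu.count i

/-- `d(μ) = ∏_i l_i(μ)!` for a multiset `μ` of parts. -/
def dPart (mu : Multiset ℕ) : ℕ :=
  ∏ i ∈ mu.toFinset, Nat.factorial (mu.count i)

namespace Equiv.Perm

theorem list_prod_apply_eq_self {α : Type*} {l : List (Perm α)} {x : α}
    (h : ∀ τ ∈ l, τ x = x) : l.prod x = x := by
  induction l with
  | nil => rfl
  | cons a l ih =>
    rw [List.forall_mem_cons] at h
    rw [List.prod_cons, mul_apply, ih h.2, h.1]

variable {α : Type*} [DecidableEq α]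

theorem list_prod_apply_ne_self_of_countP_eq_one {l : List (Perm α)} {x : α}
    (h : l.countP (fun τ => τ x ≠ x) = 1) : l.prod x ≠ x := by
  induction l with
  | nil => simp at h
  | cons a l ih =>
    rw [List.prod_cons, mul_apply]
    by_cases hax : a x = x
    · rw [List.countP_cons_of_neg (by simpa using hax)] at h
      rw [← hax, Ne, a.apply_eq_iff_eq, hax]
      exact ih h
    · rw [List.countP_cons_of_pos (by simpa using hax), add_eq_right,
        List.countP_eq_zero] at h
      rw [list_prod_apply_eq_self (by simpa using h)]
      exact hax

variable [Fintype α]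

theorem card_support_list_prod_le (l : List (Perm α)) :
    #l.prod.support ≤ #{x | ∃ τ ∈ l, τ x ≠ x} := by
  refine card_le_card fun x hx => ?_
  by_contra h
  simp only [mem_filter, mem_univ, true_and, not_exists, not_and, not_not] at h
  exact mem_support.mp hx (list_prod_apply_eq_self h)

theorem sum_card_support_eq_sum_countP (l : List (Perm α)) :
    (l.map fun τ => #τ.support).sum = ∑ x, l.countP (fun τ => τ x ≠ x) := by
  induction l with
  | nil => simp
  | cons a l ih =>
    simp only [List.map_cons, List.sum_cons, List.countP_cons, sum_add_distrib, ih]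
    rw [add_comm, support, card_filter]
    simp

/-- Points moved by exactly one factor are moved by the product; the others are counted at
least twice in the sum of the support sizes. -/
theorem two_mul_card_moved_le (l : List (Perm α)) :
    2 * #{x | ∃ τ ∈ l, τ x ≠ x} ≤ #l.prod.support + (l.map fun τ => #τ.support).sum := by
  set c : α → ℕ := fun x => l.countP (fun τ => τ x ≠ x)
  have h_once : #{x | c x = 1} ≤ #l.prod.support :=
    card_le_card fun x hx =>
      mem_support.mpr (list_prod_apply_ne_self_of_countP_eq_one (mem_filter.mp hx).2)
  have h_moved : #{x | ∃ τ ∈ l, τ x ≠ x} = ∑ x, if 0 < c x then 1 else 0 := by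
    rw [card_filter]
    exact sum_congr rfl fun x _ => by simp [c, List.countP_pos_iff]
  rw [sum_card_support_eq_sum_countP, h_moved, mul_sum]
  calc ∑ x, 2 * (if 0 < c x then 1 else 0)
      ≤ ∑ x, ((if c x = 1 then 1 else 0) + c x) :=
        sum_le_sum fun x _ => by split_ifs <;> omega
    _ ≤ #l.prod.support + ∑ x, c x := by
        rw [sum_add_distrib, ← card_filter]
        exact Nat.add_le_add_right h_once _

theorem card_biUnion_support_bounds {k : ℕ} {ν μ : Multiset ℕ} {t : Fin k → Perm α}
    (hν : ∀ j, (t j).cycleType = ν) (hμ : (List.ofFn t).prod.cycleType = μ) :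
    μ.sum ≤ #(univ.biUnion fun j => (t j).support) ∧
      2 * #(univ.biUnion fun j => (t j).support) ≤ μ.sum + k * ν.sum := by
  have h_moved : #{x | ∃ τ ∈ List.ofFn t, τ x ≠ x} = #(univ.biUnion fun j => (t j).support) := by
    congr 1; ext x; simp [List.mem_ofFn']
  have h_sum : ((List.ofFn t).map fun τ => #τ.support).sum = k * ν.sum := by
    simp [List.sum_ofFn, ← sum_cycleType, hν]
  rw [← h_moved, ← hμ, sum_cycleType]
  exact ⟨card_support_list_prod_le _, h_sum ▸ two_mul_card_moved_le _⟩

variable {ι : Type*} [DecidableEq ι] [Fintype ι]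

theorem card_tuples_support_subset_le (W : Finset α) :
    #{t : ι → Perm α | ∀ j, (t j).support ⊆ W} ≤ (#W)! ^ Fintype.card ι := by
  calc #{t : ι → Perm α | ∀ j, (t j).support ⊆ W}
      ≤ #(univ.image fun (s : ι → Perm W) j => ofSubtype (s j)) := by
        refine card_le_card fun t ht => ?_
        have ht' : ∀ j, t j ∈ (ofSubtype : Perm W →* Perm α).range := fun j =>
          mem_range_ofSubtype_iff.mpr (by exact_mod_cast (mem_filter.mp ht).2 j)
        choose s hs using ht'
        exact mem_image.mpr ⟨s, mem_univ _, funext hs⟩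
    _ ≤ (#W)! ^ Fintype.card ι := by
        refine card_image_le.trans ?_
        simp [Fintype.card_perm]

theorem card_tuples_card_biUnion_support_le (u : ℕ) (hu : u ≤ Fintype.card α) :
    #{t : ι → Perm α | #(univ.biUnion fun j => (t j).support) ≤ u} ≤
      Fintype.card α ^ u * u ! ^ Fintype.card ι := by
  calc #{t : ι → Perm α | #(univ.biUnion fun j => (t j).support) ≤ u}
      ≤ #((univ.powersetCard u).biUnion fun W =>
          {t : ι → Perm α | ∀ j, (t j).support ⊆ W}) := by
        refine card_le_card fun t ht => ?_
        obtain ⟨W, hW, -, hWu⟩ := exists_subsuperset_card_eq (subset_univ _)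
          (mem_filter.mp ht).2 (by simpa using hu)
        refine mem_biUnion.mpr ⟨W, by simp [hWu], mem_filter.mpr ⟨mem_univ _, fun j x hx => ?_⟩⟩
        exact hW (mem_biUnion.mpr ⟨j, mem_univ _, hx⟩)
    _ ≤ ∑ W ∈ univ.powersetCard u, (#W)! ^ Fintype.card ι :=
        card_biUnion_le.trans (sum_le_sum fun W _ => card_tuples_support_subset_le W)
    _ = (Fintype.card α).choose u * u ! ^ Fintype.card ι := by
        rw [sum_congr rfl fun W hW => by rw [(mem_powersetCard.mp hW).2]]
        simp
    _ ≤ Fintype.card α ^ u * u ! ^ Fintype.card ι :=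
        Nat.mul_le_mul_right _ (Nat.choose_le_pow _ _)

end Equiv.Perm

theorem cPart_eq_dPart_mul_prod (s : Multiset ℕ) : cPart s = dPart s * s.prod := by
  rw [cPart, dPart, prod_mul_distrib, ← Finset.prod_multiset_count]

theorem dPart_le_factorial_card (s : Multiset ℕ) : dPart s ≤ (Multiset.card s)! := by
  have h := Nat.prod_factorial_dvd_factorial_sum s.toFinset s.count
  rw [Multiset.toFinset_sum_count_eq] at h
  exact Nat.le_of_dvd (Nat.factorial_pos _) h

theorem cPart_le (s : Multiset ℕ) : cPart s ≤ (Multiset.card s)! * s.sum ^ Multiset.card s := by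
  rw [cPart_eq_dPart_mul_prod]
  exact Nat.mul_le_mul (dPart_le_factorial_card s)
    (Multiset.prod_le_pow_card s _ fun _ hx => Multiset.le_sum_of_mem hx)

theorem cPart_eq_factorial_count_one_mul (s : Multiset ℕ) :
    cPart s = (s.count 1)! * cPart (s.filter (· ≠ 1)) := by
  rw [cPart, cPart, Multiset.toFinset_filter, filter_ne']
  by_cases h1 : 1 ∈ s.toFinset
  · rw [← mul_prod_erase _ _ h1, one_pow, mul_one]
    congr 1
    refine prod_congr rfl fun i hi => ?_
    rw [Multiset.count_filter_of_pos (p := (· ≠ 1)) (ne_of_mem_erase hi)]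
  · rw [erase_eq_of_notMem h1, Multiset.count_eq_zero_of_notMem (by simpa using h1),
      Nat.factorial_zero, one_mul]
    refine prod_congr rfl fun i hi => ?_
    rw [Multiset.count_filter_of_pos (p := (· ≠ 1)) (ne_of_mem_of_not_mem hi h1)]

theorem Nat.pow_sub_mul_factorial_sub_le {n m q : ℕ} (hmq : m ≤ q) (hmn : m ≤ n) :
    (n - q) ^ m * (n - m)! ≤ n ! := by
  rw [← Nat.factorial_mul_descFactorial hmn, mul_comm]
  refine Nat.mul_le_mul_left _ (le_trans ?_ (Nat.pow_sub_le_descFactorial n m))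
  exact Nat.pow_le_pow_left (by omega) m

namespace Nat.Partition

variable {n : ℕ}

/-- For the cycle type `δ` of a permutation, this is its `Equiv.Perm.cycleType`. -/
def nontrivialParts (δ : n.Partition) : Multiset ℕ := δ.parts.filter (· ≠ 1)

theorem nontrivialParts_add_replicate_count_one (δ : n.Partition) :
    δ.nontrivialParts + Multiset.replicate (δ.parts.count 1) 1 = δ.parts := by
  rw [nontrivialParts, ← Multiset.filter_eq']
  simpa only [ne_eq, not_not, eq_comm] using Multiset.filter_add_not (· ≠ 1) δ.parts

theorem sum_nontrivialParts_add_count_one (δ : n.Partition) :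
    δ.nontrivialParts.sum + δ.parts.count 1 = n := by
  conv_rhs => rw [← δ.parts_sum, ← nontrivialParts_add_replicate_count_one δ]
  simp

theorem nontrivialParts_injective : Function.Injective (nontrivialParts (n := n)) := by
  intro δ δ' h
  have h_count : δ.parts.count 1 = δ'.parts.count 1 := by
    have := sum_nontrivialParts_add_count_one δ
    have := sum_nontrivialParts_add_count_one δ'
    rw [h] at *
    omega
  ext1
  rw [← nontrivialParts_add_replicate_count_one δ, ← nontrivialParts_add_replicate_count_one δ',
    h, h_count]

theorem two_le_sum_nontrivialParts {δ : n.Partition} (hδ : δ.parts ≠ Multiset.replicate n 1) :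
    2 ≤ δ.nontrivialParts.sum := by
  obtain ⟨i, hi⟩ : ∃ i ∈ δ.parts, i ≠ 1 := by
    by_contra! h
    have h_rep := Multiset.eq_replicate_card.mpr h
    have h_sum := δ.parts_sum
    rw [h_rep, Multiset.sum_replicate, smul_eq_mul, mul_one] at h_sum
    rw [h_sum] at h_rep
    exact hδ h_rep
  have hi2 : 2 ≤ i := by have := δ.parts_pos hi.1; omega
  exact hi2.trans (Multiset.le_sum_of_mem (Multiset.mem_filter.mpr hi))

theorem card_le_of_sum_nontrivialParts_le (n q : ℕ) :
    #{δ : n.Partition | δ.nontrivialParts.sum ≤ q} ≤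
      ∑ m ∈ range (q + 1), Fintype.card m.Partition := by
  calc #{δ : n.Partition | δ.nontrivialParts.sum ≤ q}
      ≤ #((range (q + 1)).biUnion fun m => univ.image (parts (n := m))) := by
        refine card_le_card_of_injOn nontrivialParts (fun δ hδ => ?_)
          nontrivialParts_injective.injOn
        refine mem_biUnion.mpr ⟨_, mem_range.mpr (Nat.lt_succ_of_le (mem_filter.mp hδ).2),
          mem_image.mpr ⟨⟨δ.nontrivialParts,
            fun hi => δ.parts_pos (Multiset.mem_of_mem_filter hi), rfl⟩, mem_univ _, rfl⟩⟩
    _ ≤ ∑ m ∈ range (q + 1), Fintype.card m.Partition :=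
        card_biUnion_le.trans (sum_le_sum fun m _ => Finset.card_image_le)

theorem cPart_mul_pow_sub_le {q : ℕ} {δ : n.Partition} (hδ : δ.parts ≠ Multiset.replicate n 1)
    (hq : δ.nontrivialParts.sum ≤ q) (hqn : q ≤ n) :
    cPart δ.parts * (n - q) ^ δ.nontrivialParts.sum ≤ q ! * q ^ q * n ! := by
  have hm2 := two_le_sum_nontrivialParts hδ
  have h_count : δ.parts.count 1 = n - δ.nontrivialParts.sum := by
    have := sum_nontrivialParts_add_count_one δ
    omega
  have h_card : Multiset.card δ.nontrivialParts ≤ q := by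
    refine le_trans ?_ hq
    simpa using Multiset.card_nsmul_le_sum (s := δ.nontrivialParts) fun i hi =>
      δ.parts_pos (Multiset.mem_of_mem_filter hi)
  have h_cPart : cPart δ.nontrivialParts ≤ q ! * q ^ q :=
    (cPart_le _).trans (Nat.mul_le_mul (Nat.factorial_le h_card)
      ((Nat.pow_le_pow_left hq _).trans (Nat.pow_le_pow_right (by omega) h_card)))
  rw [cPart_eq_factorial_count_one_mul, h_count, mul_comm, ← mul_assoc]
  calc (n - q) ^ δ.nontrivialParts.sum * (n - δ.nontrivialParts.sum)! * cPart δ.nontrivialParts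
      ≤ n ! * (q ! * q ^ q) :=
        Nat.mul_le_mul (Nat.pow_sub_mul_factorial_sub_le hq (hq.trans hqn)) h_cPart
    _ = q ! * q ^ q * n ! := mul_comm _ _

end Nat.Partition

/-- `B_{n,ν,k,μ}`, with `Equiv.Perm.cycleType`s, which omit the fixed points. -/
noncomputable def tupleCount (k n : ℕ) (ν μ : Multiset ℕ) : ℕ :=
  Nat.card {t : Fin k → Perm (Fin n) //
    (∀ j, (t j).cycleType = ν) ∧ (List.ofFn t).prod.cycleType = μ}

theorem tupleCount_eq_zero_of_lt {k n : ℕ} {ν μ : Multiset ℕ} (h : k * ν.sum < μ.sum) :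
    tupleCount k n ν μ = 0 := by
  refine Nat.card_eq_zero.mpr (Or.inl ⟨fun ⟨t, hν, hμ⟩ => ?_⟩)
  have := Perm.card_biUnion_support_bounds hν hμ
  omega

theorem tupleCount_le {k n : ℕ} {ν μ : Multiset ℕ} (h : (μ.sum + k * ν.sum) / 2 ≤ n) :
    tupleCount k n ν μ ≤ n ^ ((μ.sum + k * ν.sum) / 2) * ((μ.sum + k * ν.sum) / 2)! ^ k := by
  set u := (μ.sum + k * ν.sum) / 2
  calc tupleCount k n ν μ
      ≤ Nat.card {t : Fin k → Perm (Fin n) // #(univ.biUnion fun j => (t j).support) ≤ u} := by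
        refine Nat.card_mono (Set.toFinite _) fun t ⟨hν, hμ⟩ => ?_
        have := Perm.card_biUnion_support_bounds hν hμ
        show _ ≤ u
        omega
    _ = #{t : Fin k → Perm (Fin n) | #(univ.biUnion fun j => (t j).support) ≤ u} := by
        rw [Nat.card_eq_fintype_card, Fintype.card_subtype]
    _ ≤ Fintype.card (Fin n) ^ u * u ! ^ Fintype.card (Fin k) :=
        Perm.card_tuples_card_biUnion_support_le u (by simpa using h)
    _ = n ^ u * u ! ^ k := by simp only [Fintype.card_fin]

theorem sqrt_div_sub_pow_le {n q m : ℕ} (hn : 2 * q + 2 ≤ n) (hm : 2 ≤ m) :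
    (√n / ((n - q : ℕ) : ℝ)) ^ m ≤ 4 / n := by
  set w : ℝ := ((n - q : ℕ) : ℝ)
  have hw2 : (2 : ℝ) ≤ w := by simp only [w]; exact_mod_cast (by omega : 2 ≤ n - q)
  have hnw : (n : ℝ) ≤ 2 * w := by simp only [w]; exact_mod_cast (by omega : n ≤ 2 * (n - q))
  have hn0 : (0 : ℝ) < n := by exact_mod_cast (by omega : 0 < n)
  have h_le_one : √n / w ≤ 1 := by
    rw [div_le_one (by linarith), Real.sqrt_le_iff]
    constructor <;> nlinarith
  calc (√n / w) ^ m ≤ (√n / w) ^ 2 := pow_le_pow_of_le_one (by positivity) h_le_one hm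
    _ = n / w ^ 2 := by rw [div_pow, Real.sq_sqrt hn0.le]
    _ ≤ 4 / n := by
        rw [div_le_div_iff₀ (by positivity) hn0]
        nlinarith

theorem tupleCount_le_sqrt_pow {M k n : ℕ} (ν : M.Partition) {μ : Multiset ℕ}
    (hq : μ.sum ≤ k * M) (hn : k * M < n) :
    (tupleCount k n ν.parts μ : ℝ) ≤ √n ^ (μ.sum + k * M) * ((k * M)! ^ k : ℕ) := by
  have h := tupleCount_le (k := k) (n := n) (ν := ν.parts) (μ := μ) (by rw [ν.parts_sum]; omega)
  rw [ν.parts_sum] at h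
  calc (tupleCount k n ν.parts μ : ℝ)
      ≤ (n : ℝ) ^ ((μ.sum + k * M) / 2) * (((μ.sum + k * M) / 2)! ^ k : ℕ) := by exact_mod_cast h
    _ = √n ^ (2 * ((μ.sum + k * M) / 2)) * (((μ.sum + k * M) / 2)! ^ k : ℕ) := by
        rw [pow_mul, Real.sq_sqrt n.cast_nonneg]
    _ ≤ √n ^ (μ.sum + k * M) * ((k * M)! ^ k : ℕ) := by
        gcongr
        · exact Real.one_le_sqrt.mpr (by exact_mod_cast (by omega : 1 ≤ n))
        · omega
        · omega

theorem summand_le_of_sum_nontrivialParts_le {M k n : ℕ} (ν : M.Partition) (C : ℝ)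
    (hn : 2 * (k * M) + 2 ≤ n) {δ : n.Partition} (hδ : δ.parts ≠ Multiset.replicate n 1)
    (hq : δ.nontrivialParts.sum ≤ k * M) :
    (cPart δ.parts / n ! : ℝ) * tupleCount k n ν.parts δ.nontrivialParts * √(C / n ^ M) ^ k ≤
      4 * ((k * M)! * (k * M) ^ (k * M) * (k * M)! ^ k : ℕ) * √C ^ k / n := by
  have hm2 := δ.two_le_sum_nontrivialParts hδ
  have h_cPart := δ.cPart_mul_pow_sub_le hδ hq (by omega)
  have h_B := tupleCount_le_sqrt_pow (n := n) ν hq (by omega)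
  set q := k * M
  set m := δ.nontrivialParts.sum
  have hw0 : (0 : ℝ) < ((n - q : ℕ) : ℝ) := by exact_mod_cast (by omega : 0 < n - q)
  have h_c : (cPart δ.parts / n ! : ℝ) ≤ (q ! * q ^ q : ℕ) / ((n - q : ℕ) : ℝ) ^ m := by
    rw [div_le_div_iff₀ (by positivity) (by positivity)]
    exact_mod_cast h_cPart
  set w : ℝ := ((n - q : ℕ) : ℝ)
  have hn0 : (0 : ℝ) < n := by exact_mod_cast (by omega : 0 < n)
  have h_sqrt : √(C / n ^ M) ^ k = √C ^ k / √n ^ q := by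
    have : √((n : ℝ) ^ M) = √n ^ M := by
      rw [Real.sqrt_eq_iff_eq_sq (by positivity) (by positivity), ← pow_mul, mul_comm, pow_mul,
        Real.sq_sqrt hn0.le]
    rw [Real.sqrt_div' _ (by positivity), this, div_pow, ← pow_mul, mul_comm M]
  calc (cPart δ.parts / n ! : ℝ) * tupleCount k n ν.parts δ.nontrivialParts * √(C / n ^ M) ^ k
      ≤ ((q ! * q ^ q : ℕ) / w ^ m) * (√n ^ (m + q) * (q ! ^ k : ℕ)) * (√C ^ k / √n ^ q) := by
        rw [h_sqrt]; gcongr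
    _ = (q ! * q ^ q * q ! ^ k : ℕ) * √C ^ k * (√n / w) ^ m := by
        rw [div_pow, pow_add]
        field_simp
        push_cast
        ring
    _ ≤ (q ! * q ^ q * q ! ^ k : ℕ) * √C ^ k * (4 / n) := by
        gcongr; exact sqrt_div_sub_pow_le hn hm2
    _ = 4 * (q ! * q ^ q * q ! ^ k : ℕ) * √C ^ k / n := by ring

theorem summand_le {M k n : ℕ} (ν : M.Partition) (C : ℝ) (hn : 2 * (k * M) + 2 ≤ n)
    {δ : n.Partition} (hδ : δ.parts ≠ Multiset.replicate n 1) :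
    (cPart δ.parts / n ! : ℝ) * tupleCount k n ν.parts δ.nontrivialParts * √(C / n ^ M) ^ k ≤
      if δ.nontrivialParts.sum ≤ k * M then
        4 * ((k * M)! * (k * M) ^ (k * M) * (k * M)! ^ k : ℕ) * √C ^ k / n
      else 0 := by
  split_ifs with hq
  · exact summand_le_of_sum_nontrivialParts_le ν C hn hδ hq
  · rw [tupleCount_eq_zero_of_lt (by rw [ν.parts_sum]; omega)]
    simp

theorem non_identity_classes_negligible_general (M k : ℕ) (ν : Nat.Partition M) :
    Filter.Tendsto
      (fun n : ℕ =>
        ∑ᶠ δ : {δ : Nat.Partition n // δ.parts ≠ Multiset.replicate n 1},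
          ((cPart (δ : Nat.Partition n).parts : ℝ) / (Nat.factorial n : ℝ)) *
            (Nat.card {t : Fin k → Equiv.Perm (Fin n) //
                (∀ j, (t j).cycleType = ν.parts) ∧
                (List.ofFn t).prod.cycleType =
                  (δ : Nat.Partition n).parts.filter (fun i => i ≠ 1)} : ℝ) *
            (Real.sqrt (((dPart ν.parts : ℝ) * (cPart ν.parts : ℝ)) / (n : ℝ) ^ M)) ^ k)
      Filter.atTop (nhds 0) := by
  set q := k * M
  set K : ℝ := 4 * (q ! * q ^ q * q ! ^ k : ℕ) * √(dPart ν.parts * cPart ν.parts) ^ k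
  set D := ∑ m ∈ range (q + 1), Fintype.card m.Partition
  refine squeeze_zero' (Eventually.of_forall fun n => finsum_nonneg fun δ => by positivity)
    ?_ (tendsto_const_div_atTop_nhds_zero_nat (D * K))
  filter_upwards [eventually_ge_atTop (2 * q + 2)] with n hn
  rw [finsum_eq_sum_of_fintype]
  calc _ ≤ ∑ δ : {δ : n.Partition // δ.parts ≠ Multiset.replicate n 1},
          if δ.1.nontrivialParts.sum ≤ q then K / n else 0 :=
        sum_le_sum fun δ _ => summand_le ν _ hn δ.2
    _ ≤ ∑ δ : n.Partition, if δ.nontrivialParts.sum ≤ q then K / n else 0 := by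
        refine le_of_eq_of_le (sum_map univ (Function.Embedding.subtype _)
          fun δ : n.Partition => if δ.nontrivialParts.sum ≤ q then K / n else 0).symm ?_
        exact sum_le_univ_sum_of_nonneg fun δ => by positivity
    _ = #{δ : n.Partition | δ.nontrivialParts.sum ≤ q} * (K / n) := by
        rw [sum_ite, sum_const_zero, add_zero, sum_const, nsmul_eq_mul]
    _ ≤ D * (K / n) := mul_le_mul_of_nonneg_right
          (by exact_mod_cast Nat.Partition.card_le_of_sum_nontrivialParts_le n q) (by positivity)
    _ = D * K / n := (mul_div_assoc _ _ _).symm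

/-- For a fixed partition `ν` with no parts equal to `1` and a fixed `k > 0`,
the sum over all partitions `δ` of `n` different from `(1,1,…,1)` of
`(c(δ)/n!) · B_{n,ν,k,δ} · (d(ν)c(ν)/n^{n(ν)})^{k/2}` tends to `0` as `n → ∞`,
where `B_{n,ν,k,δ}` counts `k`-tuples of permutations of cycle type `ν` in `S_n`
whose product has cycle type `δ`. -/
theorem non_identity_classes_negligible (M k : ℕ) (hk : 0 < k)
    (ν : Nat.Partition M) (hν : 1 ∉ ν.parts) :
    Filter.Tendsto
      (fun n : ℕ =>
        ∑ᶠ δ : {δ : Nat.Partition n // δ.parts ≠ Multiset.replicate n 1},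
          ((cPart (δ : Nat.Partition n).parts : ℝ) / (Nat.factorial n : ℝ)) *
            (Nat.card {t : Fin k → Equiv.Perm (Fin n) //
                (∀ j, (t j).cycleType = ν.parts) ∧
                (List.ofFn t).prod.cycleType =
                  (δ : Nat.Partition n).parts.filter (fun i => i ≠ 1)} : ℝ) *
            (Real.sqrt (((dPart ν.parts : ℝ) * (cPart ν.parts : ℝ)) / (n : ℝ) ^ M)) ^ k)
      Filter.atTop (nhds 0) :=
  non_identity_classes_negligible_general M k ν
end
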